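/- arXiv:math/0703781 — 3 statements merged into one kernel-verified Lean document; each statement's English description precedes it below -/
import Mathlib

section
/- Assume Q(x) → +∞ as x → ∞, let λ > 0, and let η : (0,∞) → ℝ be a strictly positive C² function satisfying η''(x) − 2q(x)η'(x) = −2λη(x) for all x > 0. Then the limits F(0⁺) := lim_{x→0⁺} F(x) ∈ (0,∞] and F(∞) := lim_{x→∞} F(x) ∈ [0,∞) both exist, the identity ∫₀^∞ η(y) e^{−Q(y)} dy = (F(0⁺) − F(∞))/(2λ) holds in [0,∞], and consequently ∫₀^∞ η(y) e^{−Q(y)} dy < ∞ if and only if F(0⁺) < ∞. -/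
open Filter Set Topology MeasureTheory
open scoped ENNReal

/-!
By the equation, the flux `F = η' e^{-Q}` satisfies `F' = -2λ η e^{-Q} < 0`, so `F` is strictly
decreasing on `(0, ∞)` and has one-sided limits at `0⁺` and at `∞`. It never becomes negative:
if `F b < 0`, then as soon as `Q ≥ 0` we get `η' ≤ η' e^{-Q} ≤ F b < 0`, which drives the positive
function `η` below zero. The identity is the fundamental theorem of calculus on `[a, b]` followed
by monotone convergence as `a → 0⁺`, `b → ∞`; all terms being nonnegative, the integral is finite
exactly when `F(0⁺)` is.
-/

theorem lintegral_Ioc_ofReal_eq_of_hasDerivAt {f F : ℝ → ℝ} {x y : ℝ} (hxy : x ≤ y)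
    (hderiv : ∀ t ∈ Icc x y, HasDerivAt F (-f t) t) (hcont : ContinuousOn f (Icc x y))
    (hf : ∀ t ∈ Icc x y, 0 ≤ f t) :
    ∫⁻ t in Ioc x y, ENNReal.ofReal (f t) = ENNReal.ofReal (F x - F y) := by
  have hint : IntegrableOn f (Ioc x y) := hcont.integrableOn_Icc.mono_set Ioc_subset_Icc_self
  have hftc : ∫ t in x..y, f t = F x - F y := by
    have := intervalIntegral.integral_eq_sub_of_hasDerivAt (f := -F) (f' := f)
      (fun t ht => by simpa using (hderiv t (uIcc_of_le hxy ▸ ht)).neg)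
      (hcont.intervalIntegrable_of_Icc hxy)
    rw [this, Pi.neg_apply, Pi.neg_apply]; ring
  rw [← ofReal_integral_eq_lintegral_ofReal hint
    ((ae_restrict_mem measurableSet_Ioc).mono fun t ht => hf t (Ioc_subset_Icc_self ht)),
    ← intervalIntegral.integral_of_le hxy, hftc]

theorem lintegral_Ioi_ofReal_eq_sub_of_hasDerivAt {f F : ℝ → ℝ} {a Ftop : ℝ} {Fa : ℝ≥0∞}
    (hderiv : ∀ x ∈ Ioi a, HasDerivAt F (-f x) x) (hcont : ContinuousOn f (Ioi a))
    (hf : ∀ x ∈ Ioi a, 0 ≤ f x) (hF : ∀ x ∈ Ioi a, 0 ≤ F x)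
    (hFa : Tendsto (fun x => ENNReal.ofReal (F x)) (𝓝[>] a) (𝓝 Fa))
    (hFtop : Tendsto F atTop (𝓝 Ftop)) :
    ∫⁻ x in Ioi a, ENNReal.ofReal (f x) = Fa - ENNReal.ofReal Ftop := by
  have hfst : Tendsto Prod.fst (𝓝[>] a ×ˢ (atTop : Filter ℝ)) (𝓝[>] a) := tendsto_fst
  have hsnd : Tendsto Prod.snd (𝓝[>] a ×ˢ (atTop : Filter ℝ)) atTop := tendsto_snd
  have hcover : AECover (volume.restrict (Ioi a)) (𝓝[>] a ×ˢ atTop)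
      fun p : ℝ × ℝ => Ioc p.1 p.2 := by
    simpa only [Ioi_inter_Iic] using
      (aecover_Ioi_of_Ioi (μ := volume) (hfst.mono_right nhdsWithin_le_nhds)).inter
        (aecover_Iic hsnd)
  refine hcover.lintegral_eq_of_tendsto _
    ((hcont.aemeasurable measurableSet_Ioi).ennreal_ofReal) ?_
  refine (ENNReal.Tendsto.sub (hFa.comp hfst)
    ((ENNReal.continuous_ofReal.tendsto _).comp (hFtop.comp hsnd))
    (Or.inr ENNReal.ofReal_ne_top)).congr' ?_
  have hnear : ∀ᶠ p : ℝ × ℝ in 𝓝[>] a ×ˢ atTop, p.1 ∈ Ioo a (a + 1) ∧ a + 1 ≤ p.2 :=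
    (hfst.eventually (Ioo_mem_nhdsGT (by linarith))).and
      (hsnd.eventually (eventually_ge_atTop _))
  filter_upwards [hnear] with p ⟨⟨hap, hp1⟩, hp2⟩
  have hsub : Icc p.1 p.2 ⊆ Ioi a := fun t ht => hap.trans_le ht.1
  rw [Measure.restrict_restrict measurableSet_Ioc,
    inter_eq_left.2 (Ioc_subset_Icc_self.trans hsub),
    lintegral_Ioc_ofReal_eq_of_hasDerivAt (by linarith) (fun t ht => hderiv t (hsub ht))
      (hcont.mono hsub) (fun t ht => hf t (hsub ht)),
    ENNReal.ofReal_sub _ (hF _ (hsub (right_mem_Icc.2 (by linarith))))]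
  rfl

theorem lintegral_Ioi_ofReal_eq_div_of_hasDerivAt {f F : ℝ → ℝ} {a c Ftop : ℝ} {Fa : ℝ≥0∞}
    (hc : 0 < c) (hderiv : ∀ x ∈ Ioi a, HasDerivAt F (-(c * f x)) x)
    (hcont : ContinuousOn f (Ioi a)) (hf : ∀ x ∈ Ioi a, 0 ≤ f x) (hF : ∀ x ∈ Ioi a, 0 ≤ F x)
    (hFa : Tendsto (fun x => ENNReal.ofReal (F x)) (𝓝[>] a) (𝓝 Fa))
    (hFtop : Tendsto F atTop (𝓝 Ftop)) :
    ∫⁻ x in Ioi a, ENNReal.ofReal (f x) = (Fa - ENNReal.ofReal Ftop) / ENNReal.ofReal c := by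
  rw [ENNReal.eq_div_iff (ENNReal.ofReal_ne_zero_iff.2 hc) ENNReal.ofReal_ne_top,
    ← lintegral_const_mul' _ _ ENNReal.ofReal_ne_top,
    ← lintegral_Ioi_ofReal_eq_sub_of_hasDerivAt hderiv (continuousOn_const.mul hcont)
      (fun x hx => mul_nonneg hc.le (hf x hx)) hF hFa hFtop]
  exact setLIntegral_congr_fun measurableSet_Ioi fun x _ => (ENNReal.ofReal_mul hc.le).symm

theorem AntitoneOn.exists_tendsto_atTop {f : ℝ → ℝ} {a : ℝ} (hf : AntitoneOn f (Ioi a))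
    (hbdd : BddBelow (f '' Ioi a)) : ∃ L, Tendsto f atTop (𝓝 L) := by
  have hmem : ∀ x, max (a + 1) x ∈ Ioi a := fun x => by
    simp only [mem_Ioi]; linarith [le_max_left (a + 1) x]
  have hg : Antitone fun x => f (max (a + 1) x) := fun x y hxy =>
    hf (hmem x) (hmem y) (max_le_max le_rfl hxy)
  refine ⟨_, (tendsto_atTop_ciInf hg (hbdd.mono ?_)).congr' ?_⟩
  · rintro _ ⟨x, rfl⟩
    exact ⟨_, hmem x, rfl⟩
  · filter_upwards [eventually_ge_atTop (a + 1)] with x hx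
    rw [max_eq_right hx]

theorem StrictAntiOn.pos_of_tendsto_ofReal_nhdsGT {F : ℝ → ℝ} {a : ℝ} {Fa : ℝ≥0∞}
    (hanti : StrictAntiOn F (Ioi a)) (hF : ∀ x ∈ Ioi a, 0 ≤ F x)
    (hFa : Tendsto (fun x => ENNReal.ofReal (F x)) (𝓝[>] a) (𝓝 Fa)) : 0 < Fa := by
  have hb : a + 1 ∈ Ioi a := mem_Ioi.2 (by linarith)
  have hc : a + 2 ∈ Ioi a := mem_Ioi.2 (by linarith)
  have hFb : 0 < F (a + 1) := (hF _ hc).trans_lt (hanti hb hc (by linarith))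
  refine (ENNReal.ofReal_pos.2 hFb).trans_le (ge_of_tendsto hFa ?_)
  filter_upwards [Ioo_mem_nhdsGT (show a < a + 1 by linarith)] with x hx
  exact ENNReal.ofReal_le_ofReal (hanti.antitoneOn hx.1 hb hx.2.le)

theorem not_eventually_le_neg_of_hasDerivAt_of_pos {g g' : ℝ → ℝ} {a c : ℝ} (hc : 0 < c)
    (hderiv : ∀ x ∈ Ioi a, HasDerivAt g (g' x) x) (hpos : ∀ x ∈ Ioi a, 0 < g x) :
    ¬ ∀ᶠ x in atTop, g' x ≤ -c := by
  intro hle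
  obtain ⟨B, hB⟩ := eventually_atTop.1 (hle.and (eventually_gt_atTop a))
  set y := B + g B / c + 1
  have hBa : a < B := (hB B le_rfl).2
  have hgB : 0 < g B := hpos B hBa
  have hBy : B < y := by have := div_pos hgB hc; linarith
  obtain ⟨ξ, hξ, hslope⟩ := exists_hasDerivAt_eq_slope g g' hBy
    (fun t ht => (hderiv t (hBa.trans_le ht.1)).continuousAt.continuousWithinAt)
    (fun t ht => hderiv t (hBa.trans ht.1))
  have hdrop : g y - g B ≤ -c * (y - B) := by
    rw [eq_div_iff (by linarith)] at hslope
    nlinarith [(hB ξ hξ.1.le).1]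
  have hcy : c * (y - B) = g B + c := by
    simp only [y]; field_simp; ring
  linarith [hpos y (hBa.trans hBy)]

theorem hasDerivAt_of_eq_mul_intervalIntegral {q Q : ℝ → ℝ} {a b c x : ℝ}
    (hq : ContinuousOn q (Ioi a)) (hb : a < b) (hQ : ∀ y ∈ Ioi a, Q y = c * ∫ u in b..y, q u)
    (hx : a < x) :
    HasDerivAt Q (c * q x) x := by
  have hint : HasDerivAt (fun y => ∫ u in b..y, q u) (q x) x :=
    intervalIntegral.integral_hasDerivAt_right
      ((hq.mono (ordConnected_Ioi.uIcc_subset hb hx)).intervalIntegrable)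
      (hq.stronglyMeasurableAtFilter isOpen_Ioi x hx)
      (hq.continuousAt (isOpen_Ioi.mem_nhds hx))
  exact (hint.const_mul c).congr_of_eventuallyEq
    (eventually_of_mem (isOpen_Ioi.mem_nhds hx) hQ)

noncomputable def flux (η' Q : ℝ → ℝ) (x : ℝ) : ℝ := η' x * Real.exp (-Q x)

theorem hasDerivAt_flux {q Q η η' : ℝ → ℝ} {η'' l x : ℝ} (hη' : HasDerivAt η' η'' x)
    (hQ : HasDerivAt Q (2 * q x) x) (hODE : η'' - 2 * q x * η' x = -2 * l * η x) :
    HasDerivAt (flux η' Q) (-(2 * l * (η x * Real.exp (-Q x)))) x :=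
  (hη'.mul hQ.neg.exp).congr_deriv (by linear_combination Real.exp (-Q x) * hODE)

theorem flux_nonneg {Q η η' : ℝ → ℝ} (hQ : Tendsto Q atTop atTop)
    (hη : ∀ x ∈ Ioi (0 : ℝ), HasDerivAt η (η' x) x) (hpos : ∀ x ∈ Ioi (0 : ℝ), 0 < η x)
    (hanti : AntitoneOn (flux η' Q) (Ioi 0)) {b : ℝ} (hb : 0 < b) : 0 ≤ flux η' Q b := by
  by_contra! hneg
  refine not_eventually_le_neg_of_hasDerivAt_of_pos (neg_pos.2 hneg) hη hpos ?_
  filter_upwards [hQ.eventually_ge_atTop 0, eventually_ge_atTop b] with x hQx hbx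
  have hFx : η' x * Real.exp (-Q x) ≤ flux η' Q b := hanti hb (hb.trans_le hbx) hbx
  have hexp : Real.exp (-Q x) ≤ 1 := Real.exp_le_one_iff.2 (by linarith)
  nlinarith [Real.exp_pos (-Q x)]

theorem flux_limits_and_integrability_criterion_general (q q' Q : ℝ → ℝ) (l : ℝ)
    (η η' η'' : ℝ → ℝ)
    (hqderiv : ∀ x ∈ Set.Ioi (0:ℝ), HasDerivAt q (q' x) x)
    (hQ : ∀ x ∈ Set.Ioi (0:ℝ), Q x = 2 * ∫ u in (1:ℝ)..x, q u)
    (hQtop : Tendsto Q atTop atTop)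
    (hl : 0 < l)
    (hη1 : ∀ x ∈ Set.Ioi (0:ℝ), HasDerivAt η (η' x) x)
    (hη2 : ∀ x ∈ Set.Ioi (0:ℝ), HasDerivAt η' (η'' x) x)
    (hηpos : ∀ x ∈ Set.Ioi (0:ℝ), 0 < η x)
    (hODE : ∀ x ∈ Set.Ioi (0:ℝ), η'' x - 2 * q x * η' x = -2 * l * η x) :
    ∃ F0 : ℝ≥0∞, ∃ Finf : ℝ,
      Tendsto (fun x => ENNReal.ofReal (η' x * Real.exp (-(Q x)))) (𝓝[>] (0:ℝ)) (𝓝 F0) ∧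
      0 < F0 ∧
      Tendsto (fun x => η' x * Real.exp (-(Q x))) atTop (𝓝 Finf) ∧
      0 ≤ Finf ∧
      (∫⁻ y in Set.Ioi (0:ℝ), ENNReal.ofReal (η y * Real.exp (-(Q y)))) =
        (F0 - ENNReal.ofReal Finf) / ENNReal.ofReal (2 * l) ∧
      (MeasureTheory.IntegrableOn (fun y => η y * Real.exp (-(Q y))) (Set.Ioi 0) ↔
        F0 < ⊤) := by
  set f : ℝ → ℝ := fun y => η y * Real.exp (-Q y)
  have hQd (x : ℝ) (hx : 0 < x) : HasDerivAt Q (2 * q x) x :=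
    hasDerivAt_of_eq_mul_intervalIntegral
      (fun x hx => (hqderiv x hx).continuousAt.continuousWithinAt) one_pos hQ hx
  have hfc : ContinuousOn f (Ioi 0) := fun x hx =>
    ((hη1 x hx).continuousAt.mul (hQd x hx).continuousAt.neg.rexp).continuousWithinAt
  have hfpos (x : ℝ) (hx : 0 < x) : 0 < f x := mul_pos (hηpos x hx) (Real.exp_pos _)
  have hFd (x : ℝ) (hx : 0 < x) : HasDerivAt (flux η' Q) (-(2 * l * f x)) x :=
    hasDerivAt_flux (hη2 x hx) (hQd x hx) (hODE x hx)
  have hanti : StrictAntiOn (flux η' Q) (Ioi 0) :=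
    strictAntiOn_of_deriv_neg (convex_Ioi 0)
      (fun x hx => (hFd x hx).continuousAt.continuousWithinAt) fun x hx => by
        rw [interior_Ioi] at hx
        rw [(hFd x hx).deriv, neg_lt_zero]
        exact mul_pos (by positivity) (hfpos x hx)
  have hFnn (x : ℝ) (hx : 0 < x) : 0 ≤ flux η' Q x :=
    flux_nonneg hQtop hη1 hηpos hanti.antitoneOn hx
  obtain ⟨F0, hF0⟩ : ∃ F0, Tendsto (fun x => ENNReal.ofReal (flux η' Q x)) (𝓝[>] 0) (𝓝 F0) :=
    ⟨_, (ENNReal.ofReal_mono.comp_antitoneOn hanti.antitoneOn).tendsto_nhdsGT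
      (OrderTop.bddAbove _)⟩
  obtain ⟨Finf, hFinf⟩ := hanti.antitoneOn.exists_tendsto_atTop
    ⟨0, by rintro _ ⟨x, hx, rfl⟩; exact hFnn x hx⟩
  have hId := lintegral_Ioi_ofReal_eq_div_of_hasDerivAt (by positivity) hFd hfc
    (fun x hx => (hfpos x hx).le) hFnn hF0 hFinf
  refine ⟨F0, Finf, hF0, hanti.pos_of_tendsto_ofReal_nhdsGT hFnn hF0, hFinf,
    ge_of_tendsto hFinf ((eventually_gt_atTop 0).mono hFnn), hId, ?_⟩
  rw [IntegrableOn, ← lintegral_ofReal_ne_top_iff_integrable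
    (hfc.aestronglyMeasurable measurableSet_Ioi)
    (ae_restrict_of_forall_mem measurableSet_Ioi fun x hx => (hfpos x hx).le), hId]
  have h2l : ENNReal.ofReal (2 * l) ≠ 0 := ENNReal.ofReal_ne_zero_iff.2 (by positivity)
  simp only [ne_eq, ENNReal.div_eq_top, ENNReal.sub_eq_top_iff, h2l, ENNReal.ofReal_ne_top,
    and_false, false_or, not_false_eq_true, and_true, lt_top_iff_ne_top]

/-- Assume `Q(x) → +∞` as `x → ∞`, let `λ > 0`, and let `η : (0,∞) → ℝ`
be a strictly positive `C²` function satisfying `η'' − 2qη' = −2λη` on `(0,∞)`.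
Then with `F(x) = η'(x) e^{−Q(x)}`, the limit `F(0⁺)` exists in `(0,∞]` (expressed here as
a limit of `ENNReal.ofReal ∘ F` in `ℝ≥0∞`), the limit `F(∞)` exists in `[0,∞)`, the identity
`∫₀^∞ η e^{−Q} = (F(0⁺) − F(∞))/(2λ)` holds in `[0,∞]`, and `η e^{−Q}` is integrable on
`(0,∞)` iff `F(0⁺) < ∞`. -/
theorem flux_limits_and_integrability_criterion (q q' Q : ℝ → ℝ) (l : ℝ)
    (η η' η'' : ℝ → ℝ)
    (hqderiv : ∀ x ∈ Set.Ioi (0:ℝ), HasDerivAt q (q' x) x)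
    (hqcont : ContinuousOn q' (Set.Ioi 0))
    (hQ : ∀ x ∈ Set.Ioi (0:ℝ), Q x = 2 * ∫ u in (1:ℝ)..x, q u)
    (hQtop : Tendsto Q atTop atTop)
    (hl : 0 < l)
    (hη1 : ∀ x ∈ Set.Ioi (0:ℝ), HasDerivAt η (η' x) x)
    (hη2 : ∀ x ∈ Set.Ioi (0:ℝ), HasDerivAt η' (η'' x) x)
    (hη'' : ContinuousOn η'' (Set.Ioi 0))
    (hηpos : ∀ x ∈ Set.Ioi (0:ℝ), 0 < η x)
    (hODE : ∀ x ∈ Set.Ioi (0:ℝ), η'' x - 2 * q x * η' x = -2 * l * η x) :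
    ∃ F0 : ℝ≥0∞, ∃ Finf : ℝ,
      Tendsto (fun x => ENNReal.ofReal (η' x * Real.exp (-(Q x)))) (𝓝[>] (0:ℝ)) (𝓝 F0) ∧
      0 < F0 ∧
      Tendsto (fun x => η' x * Real.exp (-(Q x))) atTop (𝓝 Finf) ∧
      0 ≤ Finf ∧
      (∫⁻ y in Set.Ioi (0:ℝ), ENNReal.ofReal (η y * Real.exp (-(Q y)))) =
        (F0 - ENNReal.ofReal Finf) / ENNReal.ofReal (2 * l) ∧
      (MeasureTheory.IntegrableOn (fun y => η y * Real.exp (-(Q y))) (Set.Ioi 0) ↔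
        F0 < ⊤) :=
  flux_limits_and_integrability_criterion_general q q' Q l η η' η'' hqderiv hQ hQtop hl hη1 hη2
    hηpos hODE
end

section
/- Let γ > 0 and let h : [0,∞) → ℝ be C¹ with h(0) = 0, lim_{x→∞} h(x)/√x = −∞ and lim_{x→∞} x·h'(x)/h(x)² = 0. Define q(x) := 1/(2x) − (2/(γx))·h(γx²/4) for x > 0 and Q(x) := 2∫₁ˣ q(u) du, and set C := −inf_{x>0}(q²(x) − q'(x)) (which is finite). Then ∫₀¹ e^{−Q(y)} / (q²(y) − q'(y) + C + 2) dy < ∞, i.e. hypothesis (H3) holds. -/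
/-!
Writing `v = γx²/4`, one finds `q² - q' = 3/(4x²) + W(v)` with
`W(v) = h(v)²/(γv) - h(v)/v + h'(v)`. Near `v = 0` the `C¹` bound `|h(v)| ≤ Mv` keeps `W` bounded
below, for large `v` the two growth conditions make `h < 0` and `|h'| ≤ h²/(γv)`, so `W ≥ 0`, and
in between `W` is continuous on a compact interval. Hence `C` is finite, and the denominator of
the integrand is at least `2` and at least `3/(4y²) - K` for a constant `K`, i.e. of order `1/y²`
near `0`. The same bound `|h(v)| ≤ Mv` gives `q(u) ≤ 1/(2u) + M/2` on `(0,1]`, so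
`e^{-Q(y)} ≤ e^M / y`, and the integrand is bounded on `(0,1)`.
-/

open Filter Set Topology MeasureTheory

noncomputable def fellerDrift (γ : ℝ) (h : ℝ → ℝ) (x : ℝ) : ℝ :=
  1 / (2 * x) - 2 / (γ * x) * h (γ * x ^ 2 / 4)

noncomputable def fellerPotential (γ : ℝ) (h h' : ℝ → ℝ) (v : ℝ) : ℝ :=
  h v ^ 2 / (γ * v) - h v / v + h' v

theorem bddBelow_image_Ioi_of_continuousOn {f : ℝ → ℝ} {m₀ m₁ : ℝ} (hf : ContinuousOn f (Ioi 0))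
    (hzero : ∀ᶠ x in 𝓝[>] 0, m₀ ≤ f x) (htop : ∀ᶠ x in atTop, m₁ ≤ f x) :
    BddBelow (f '' Ioi 0) := by
  obtain ⟨a, ha, hza⟩ := mem_nhdsGT_iff_exists_Ioc_subset.1 hzero
  obtain ⟨b, hb⟩ := eventually_atTop.1 htop
  have hcover : Ioi (0 : ℝ) ⊆ Ioc 0 a ∪ Icc a b ∪ Ici b := by
    intro x (hx : 0 < x)
    rcases le_total x a with hxa | hax
    · exact .inl (.inl ⟨hx, hxa⟩)
    rcases le_total x b with hxb | hbx
    · exact .inl (.inr ⟨hax, hxb⟩)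
    · exact .inr hbx
  refine BddBelow.mono (image_mono hcover) ?_
  simp only [image_union, bddBelow_union]
  refine ⟨⟨⟨m₀, ?_⟩, isCompact_Icc.bddBelow_image (hf.mono ?_)⟩, ⟨m₁, ?_⟩⟩
  · rintro _ ⟨x, hx, rfl⟩; exact hza hx
  · exact fun x hx => ha.trans_le hx.1
  · rintro _ ⟨x, hx, rfl⟩; exact hb x hx

theorem exp_two_mul_integral_le_of_le {f : ℝ → ℝ} {c y : ℝ} (hc : 0 ≤ c) (hy : y ∈ Ioo 0 1)
    (hf : IntervalIntegrable f volume y 1) (hle : ∀ u ∈ Ioc 0 1, f u ≤ 1 / (2 * u) + c) :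
    Real.exp (2 * ∫ u in y..1, f u) ≤ Real.exp (2 * c) / y := by
  obtain ⟨hy0, hy1⟩ := hy
  have hinv : IntervalIntegrable (fun u : ℝ => u⁻¹) volume y 1 :=
    intervalIntegrable_inv_iff.2 (.inr fun h0 => by
      rw [uIcc_of_le hy1.le] at h0; linarith [h0.1])
  have hg : IntervalIntegrable (fun u : ℝ => 2⁻¹ * u⁻¹ + c) volume y 1 :=
    (hinv.const_mul _).add intervalIntegrable_const
  have hint : ∫ u in y..1, (2⁻¹ * u⁻¹ + c) = -Real.log y / 2 + c * (1 - y) := by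
    rw [intervalIntegral.integral_add (hinv.const_mul _) intervalIntegrable_const,
      intervalIntegral.integral_const_mul, integral_inv_of_pos hy0 one_pos, one_div, Real.log_inv,
      intervalIntegral.integral_const, smul_eq_mul]
    ring
  have hmono : ∫ u in y..1, f u ≤ -Real.log y / 2 + c := calc
    ∫ u in y..1, f u ≤ ∫ u in y..1, (2⁻¹ * u⁻¹ + c) :=
      intervalIntegral.integral_mono_on hy1.le hf hg fun u hu => by
        simpa [mul_comm] using hle u ⟨hy0.trans_le hu.1, hu.2⟩
    _ ≤ -Real.log y / 2 + c := by rw [hint]; nlinarith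
  calc Real.exp (2 * ∫ u in y..1, f u) ≤ Real.exp (-Real.log y + 2 * c) := by
        gcongr; linarith
    _ = Real.exp (2 * c) / y := by
        rw [Real.exp_add, Real.exp_neg, Real.exp_log hy0]; ring

theorem continuousOn_integral_of_continuousOn_Ioi {f : ℝ → ℝ} {a : ℝ}
    (hf : ContinuousOn f (Ioi 0)) (ha : 0 < a) :
    ContinuousOn (fun x => ∫ u in a..x, f u) (Ioi 0) := fun x hx =>
  (intervalIntegral.integral_hasDerivAt_right
    (hf.mono (ordConnected_Ioi.uIcc_subset ha hx)).intervalIntegrable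
    (hf.stronglyMeasurableAtFilter isOpen_Ioi x hx)
    (hf.continuousAt (Ioi_mem_nhds hx))).continuousAt.continuousWithinAt

theorem integrableOn_Ioo_div_of_le {E D : ℝ → ℝ} {a c d K : ℝ}
    (hEm : AEMeasurable E (volume.restrict (Ioo 0 1)))
    (hDm : AEMeasurable D (volume.restrict (Ioo 0 1)))
    (ha : 0 < a) (hd : 0 < d) (hK : 0 ≤ K) (hE : ∀ y ∈ Ioo 0 1, |E y| ≤ c / y)
    (hDd : ∀ y ∈ Ioo 0 1, d ≤ D y) (hDa : ∀ y ∈ Ioo 0 1, a / y ^ 2 - K ≤ D y) :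
    IntegrableOn (fun y => E y / D y) (Ioo 0 1) := by
  refine IntegrableOn.of_bound (by simp) (hEm.div hDm).aestronglyMeasurable (c * (1 + K / d) / a)
    ((ae_restrict_iff' measurableSet_Ioo).2 (ae_of_all _ fun y hy => ?_))
  have hy0 : 0 < y := hy.1
  have hD : 0 < D y := hd.trans_le (hDd y hy)
  have hc : 0 ≤ c := by
    have := mul_nonneg ((abs_nonneg _).trans (hE y hy)) hy0.le
    rwa [div_mul_cancel₀ _ hy0.ne'] at this
  -- `d ≤ D` absorbs the `- K` in the lower bound `a / y² - K ≤ D`.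
  have hyD : a / (1 + K / d) ≤ y ^ 2 * D y := by
    have h1 := hDa y hy
    rw [div_sub' (by positivity), div_le_iff₀ (by positivity)] at h1
    have h2 : K ≤ K / d * D y := by
      rw [div_mul_eq_mul_div, le_div_iff₀ hd]; exact mul_le_mul_of_nonneg_left (hDd y hy) hK
    rw [div_le_iff₀ (by positivity)]
    nlinarith [mul_le_mul_of_nonneg_left h2 (sq_nonneg y)]
  calc ‖E y / D y‖ = |E y| / D y := by rw [Real.norm_eq_abs, abs_div, abs_of_pos hD]
    _ ≤ c / y / D y := by gcongr; exact hE y hy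
    _ = c * y / (y ^ 2 * D y) := by field_simp
    _ ≤ c * y / (a / (1 + K / d)) := by gcongr
    _ = c * (1 + K / d) / a * y := by field_simp
    _ ≤ c * (1 + K / d) / a := mul_le_of_le_one_right (by positivity) hy.2.le

section Feller

variable {γ : ℝ} {h h' : ℝ → ℝ}

theorem exists_abs_le_mul_of_hasDerivWithinAt
    (hderiv : ∀ x ∈ Ici (0 : ℝ), HasDerivWithinAt h (h' x) (Ici 0) x)
    (hcont : ContinuousOn h' (Ici 0)) (h0 : h 0 = 0) (a : ℝ) :
    ∃ M, 0 ≤ M ∧ ∀ v ∈ Icc 0 a, |h v| ≤ M * v ∧ |h' v| ≤ M := by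
  obtain ⟨M, hM⟩ := isCompact_Icc.exists_bound_of_continuousOn (hcont.mono Icc_subset_Ici_self)
  refine ⟨max M 0, le_max_right _ _, fun v hv => ⟨?_, (hM v hv).trans (le_max_left _ _)⟩⟩
  have := Convex.norm_image_sub_le_of_norm_hasDerivWithin_le
    (fun z hz => (hderiv z hz.1).mono Icc_subset_Ici_self)
    (fun z hz => (hM z hz).trans (le_max_left M 0)) (convex_Icc 0 a)
    (left_mem_Icc.2 (hv.1.trans hv.2)) hv
  simpa [h0, abs_of_nonneg hv.1] using this

theorem fellerPotential_ge_of_abs_le {M v : ℝ} (hγ : 0 ≤ γ) (hv : 0 < v) (hh : |h v| ≤ M * v)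
    (hh' : |h' v| ≤ M) : -(2 * M) ≤ fellerPotential γ h h' v := by
  have hquot : h v / v ≤ M := by
    rw [div_le_iff₀ hv]; exact (le_abs_self _).trans hh
  have hsq : 0 ≤ h v ^ 2 / (γ * v) := by positivity
  unfold fellerPotential
  linarith [neg_abs_le (h' v)]

theorem eventually_neg_of_tendsto_div_sqrt_atBot
    (hh1 : Tendsto (fun x => h x / Real.sqrt x) atTop atBot) : ∀ᶠ x in atTop, h x < 0 := by
  filter_upwards [hh1.eventually_lt_atBot 0, eventually_gt_atTop 0] with x hx hx0
  exact ((div_neg_iff.1 hx).resolve_left fun hpos => (Real.sqrt_pos.2 hx0).not_gt hpos.2).1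

theorem eventually_fellerPotential_nonneg (hγ : 0 < γ) (hneg : ∀ᶠ v in atTop, h v < 0)
    (hh2 : Tendsto (fun v => v * h' v / h v ^ 2) atTop (𝓝 0)) :
    ∀ᶠ v in atTop, 0 ≤ fellerPotential γ h h' v := by
  have hγinv : 0 < 1 / γ := by positivity
  filter_upwards [hneg, hh2.eventually (lt_mem_nhds (neg_lt_zero.2 hγinv)),
    eventually_gt_atTop 0] with v hv hratio hv0
  have hsq : 0 < h v ^ 2 := by nlinarith
  rw [lt_div_iff₀ hsq, neg_mul, one_div_mul_eq_div, neg_lt, lt_div_iff₀ hγ] at hratio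
  have hquad : 0 ≤ h v ^ 2 / (γ * v) + h' v := by
    rw [div_add' _ _ _ (by positivity), le_div_iff₀ (by positivity)]
    nlinarith
  have hlin : 0 ≤ -(h v / v) := neg_nonneg.2 (div_nonpos_of_nonpos_of_nonneg hv.le hv0.le)
  unfold fellerPotential
  linarith

theorem continuousOn_fellerPotential (hγ : γ ≠ 0) (hh : ContinuousOn h (Ioi 0))
    (hh' : ContinuousOn h' (Ioi 0)) : ContinuousOn (fellerPotential γ h h') (Ioi 0) := by
  unfold fellerPotential
  have hv : ∀ v ∈ Ioi (0 : ℝ), v ≠ 0 := fun v hv => ne_of_gt hv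
  fun_prop (disch := first | exact hv | intro v hv; exact mul_ne_zero hγ (ne_of_gt hv))

theorem bddBelow_fellerPotential (hγ : 0 < γ)
    (hderiv : ∀ x ∈ Ici (0 : ℝ), HasDerivWithinAt h (h' x) (Ici 0) x)
    (hcont : ContinuousOn h' (Ici 0)) (h0 : h 0 = 0) (hneg : ∀ᶠ v in atTop, h v < 0)
    (hh2 : Tendsto (fun v => v * h' v / h v ^ 2) atTop (𝓝 0)) :
    BddBelow (fellerPotential γ h h' '' Ioi 0) := by
  obtain ⟨M, -, hM⟩ := exists_abs_le_mul_of_hasDerivWithinAt hderiv hcont h0 1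
  have hh : ContinuousOn h (Ioi 0) := fun x hx =>
    (hderiv x (Ioi_subset_Ici_self hx)).continuousWithinAt.mono Ioi_subset_Ici_self
  refine bddBelow_image_Ioi_of_continuousOn (m₀ := -(2 * M))
    (continuousOn_fellerPotential hγ.ne' hh (hcont.mono Ioi_subset_Ici_self)) ?_
    (eventually_fellerPotential_nonneg hγ hneg hh2)
  filter_upwards [Ioc_mem_nhdsGT one_pos] with v hv
  exact fellerPotential_ge_of_abs_le hγ.le hv.1 (hM v (Ioc_subset_Icc_self hv)).1
    (hM v (Ioc_subset_Icc_self hv)).2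

theorem hasDerivAt_fellerDrift {x : ℝ} (hγ : γ ≠ 0) (hx : x ≠ 0)
    (hd : HasDerivAt h (h' (γ * x ^ 2 / 4)) (γ * x ^ 2 / 4)) :
    HasDerivAt (fellerDrift γ h)
      (-(1 / (2 * x ^ 2)) + 2 / (γ * x ^ 2) * h (γ * x ^ 2 / 4) - h' (γ * x ^ 2 / 4)) x := by
  have hinner : HasDerivAt (fun x : ℝ => γ * x ^ 2 / 4) (γ * x / 2) x :=
    (((hasDerivAt_pow 2 x).const_mul γ).div_const 4).congr_deriv (by norm_num; ring)
  have h1 := (hasDerivAt_const x (1 : ℝ)).div ((hasDerivAt_id' x).const_mul 2) (by simp [hx])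
  have h2 := (hasDerivAt_const x (2 : ℝ)).div ((hasDerivAt_id' x).const_mul γ) (by simp [hx, hγ])
  refine (h1.sub (h2.mul (hd.comp x hinner))).congr_deriv ?_
  simp only [Pi.div_apply, Function.comp_apply]
  field_simp
  ring

theorem fellerDrift_sq_sub_eq {x : ℝ} (hγ : γ ≠ 0) (hx : x ≠ 0) :
    fellerDrift γ h x ^ 2
        - (-(1 / (2 * x ^ 2)) + 2 / (γ * x ^ 2) * h (γ * x ^ 2 / 4) - h' (γ * x ^ 2 / 4))
      = 3 / (4 * x ^ 2) + fellerPotential γ h h' (γ * x ^ 2 / 4) := by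
  unfold fellerDrift fellerPotential
  field_simp
  ring

theorem fellerDrift_le_of_abs_le {M u : ℝ} (hγ : 0 < γ) (hu : u ∈ Ioc 0 1) (hM : 0 ≤ M)
    (hh : |h (γ * u ^ 2 / 4)| ≤ M * (γ * u ^ 2 / 4)) :
    fellerDrift γ h u ≤ 1 / (2 * u) + M / 2 := by
  obtain ⟨hu0, hu1⟩ := hu
  have hbound : -(2 / (γ * u) * h (γ * u ^ 2 / 4)) ≤ M * u / 2 := calc
    -(2 / (γ * u) * h (γ * u ^ 2 / 4)) ≤ 2 / (γ * u) * |h (γ * u ^ 2 / 4)| := by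
      rw [← mul_neg]; gcongr; exact neg_le_abs _
    _ ≤ 2 / (γ * u) * (M * (γ * u ^ 2 / 4)) := by gcongr
    _ = M * u / 2 := by field_simp; ring
  unfold fellerDrift
  nlinarith

variable {q : ℝ → ℝ}

theorem hasDerivAt_of_eqOn_fellerDrift {x : ℝ} (hγ : 0 < γ)
    (hderiv : ∀ x ∈ Ici (0 : ℝ), HasDerivWithinAt h (h' x) (Ici 0) x)
    (hq : EqOn q (fellerDrift γ h) (Ioi 0)) (hx : 0 < x) :
    HasDerivAt q
      (-(1 / (2 * x ^ 2)) + 2 / (γ * x ^ 2) * h (γ * x ^ 2 / 4) - h' (γ * x ^ 2 / 4)) x := by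
  have hv : 0 < γ * x ^ 2 / 4 := by positivity
  exact (hasDerivAt_fellerDrift hγ.ne' hx.ne' ((hderiv _ hv.le).hasDerivAt (Ici_mem_nhds hv)))
    |>.congr_of_eventuallyEq (eventuallyEq_of_mem (Ioi_mem_nhds hx) hq)

theorem continuousOn_of_eqOn_fellerDrift (hγ : 0 < γ)
    (hderiv : ∀ x ∈ Ici (0 : ℝ), HasDerivWithinAt h (h' x) (Ici 0) x)
    (hq : EqOn q (fellerDrift γ h) (Ioi 0)) : ContinuousOn q (Ioi 0) := fun _ hx =>
  (hasDerivAt_of_eqOn_fellerDrift hγ hderiv hq hx).continuousAt.continuousWithinAt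

theorem exists_le_sq_sub_deriv_of_eqOn_fellerDrift (hγ : 0 < γ)
    (hderiv : ∀ x ∈ Ici (0 : ℝ), HasDerivWithinAt h (h' x) (Ici 0) x)
    (hcont : ContinuousOn h' (Ici 0)) (h0 : h 0 = 0) (hneg : ∀ᶠ v in atTop, h v < 0)
    (hh2 : Tendsto (fun v => v * h' v / h v ^ 2) atTop (𝓝 0))
    (hq : EqOn q (fellerDrift γ h) (Ioi 0)) :
    ∃ L, ∀ x ∈ Ioi (0 : ℝ), 3 / (4 * x ^ 2) + L ≤ q x ^ 2 - deriv q x := by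
  obtain ⟨L, hL⟩ := bddBelow_fellerPotential hγ hderiv hcont h0 hneg hh2
  refine ⟨L, fun x (hx : 0 < x) => ?_⟩
  rw [(hasDerivAt_of_eqOn_fellerDrift hγ hderiv hq hx).deriv, hq hx,
    fellerDrift_sq_sub_eq hγ.ne' hx.ne']
  have hv : 0 < γ * x ^ 2 / 4 := by positivity
  linarith [hL (mem_image_of_mem _ hv)]

theorem exists_le_of_eqOn_fellerDrift (hγ : 0 < γ)
    (hderiv : ∀ x ∈ Ici (0 : ℝ), HasDerivWithinAt h (h' x) (Ici 0) x)
    (hcont : ContinuousOn h' (Ici 0)) (h0 : h 0 = 0) (hq : EqOn q (fellerDrift γ h) (Ioi 0)) :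
    ∃ c, 0 ≤ c ∧ ∀ u ∈ Ioc (0 : ℝ) 1, q u ≤ 1 / (2 * u) + c := by
  obtain ⟨M, hM0, hM⟩ := exists_abs_le_mul_of_hasDerivWithinAt hderiv hcont h0 (γ / 4)
  refine ⟨M / 2, by positivity, fun u hu => ?_⟩
  have hv : γ * u ^ 2 / 4 ∈ Icc 0 (γ / 4) := by
    have := pow_le_one₀ hu.1.le hu.2 (n := 2)
    constructor <;> nlinarith
  rw [hq hu.1]
  exact fellerDrift_le_of_abs_le hγ hu hM0 (hM _ hv).1

end Feller

/-- Let `γ > 0` and let `h` be `C¹` on `[0,∞)` with `h(0) = 0`,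
`h(x)/√x → −∞` and `x h'(x)/h(x)² → 0` as `x → ∞`. For the drift
`q(x) = 1/(2x) − (2/(γx)) h(γx²/4)`, `Q(x) = 2∫₁ˣ q` and
`C = −inf_{x>0}(q²(x) − q'(x))` (which is finite), one has
`∫₀¹ e^{−Q(y)} / (q²(y) − q'(y) + C + 2) dy < ∞`, i.e. hypothesis (H3) holds. -/
theorem H3_for_generalized_Feller_drift (γ : ℝ) (hγ : 0 < γ) (h h' : ℝ → ℝ)
    (hderiv : ∀ x ∈ Set.Ici (0:ℝ), HasDerivWithinAt h (h' x) (Set.Ici 0) x)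
    (hcont : ContinuousOn h' (Set.Ici 0))
    (h0 : h 0 = 0)
    (hh1 : Tendsto (fun x => h x / Real.sqrt x) atTop atBot)
    (hh2 : Tendsto (fun x => x * h' x / (h x) ^ 2) atTop (𝓝 0))
    (q Q : ℝ → ℝ) (C : ℝ)
    (hq : ∀ x ∈ Set.Ioi (0:ℝ), q x = 1 / (2 * x) - (2 / (γ * x)) * h (γ * x ^ 2 / 4))
    (hQ : ∀ x ∈ Set.Ioi (0:ℝ), Q x = 2 * ∫ u in (1:ℝ)..x, q u)
    (hC : C = -sInf ((fun x => (q x) ^ 2 - deriv q x) '' Set.Ioi 0)) :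
    MeasureTheory.IntegrableOn
      (fun y => Real.exp (-(Q y)) / ((q y) ^ 2 - deriv q y + C + 2)) (Set.Ioo 0 1) := by
  have hqF : EqOn q (fellerDrift γ h) (Ioi 0) := fun x hx => hq x hx
  have hqc := continuousOn_of_eqOn_fellerDrift hγ hderiv hqF
  obtain ⟨L, hL⟩ := exists_le_sq_sub_deriv_of_eqOn_fellerDrift hγ hderiv hcont h0
    (eventually_neg_of_tendsto_div_sqrt_atBot hh1) hh2 hqF
  have hCF : ∀ x ∈ Ioi (0 : ℝ), -C ≤ q x ^ 2 - deriv q x := fun x hx => by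
    rw [hC, neg_neg]
    refine csInf_le ⟨L, forall_mem_image.2 fun y (hy : 0 < y) => ?_⟩ (mem_image_of_mem _ hx)
    linarith [hL y hy, show 0 < 3 / (4 * y ^ 2) by positivity]
  obtain ⟨c, hc, hqle⟩ := exists_le_of_eqOn_fellerDrift hγ hderiv hcont h0 hqF
  have hQc : ContinuousOn Q (Ioi 0) :=
    (continuousOn_const.mul (continuousOn_integral_of_continuousOn_Ioi hqc one_pos)).congr hQ
  have hIoo : Ioo (0 : ℝ) 1 ⊆ Ioi 0 := Ioo_subset_Ioi_self
  refine integrableOn_Ioo_div_of_le (a := 3 / 4) (c := Real.exp (2 * c)) (d := 2)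
    ((hQc.mono hIoo).neg.rexp.aemeasurable measurableSet_Ioo)
    (((((hqc.mono hIoo).aemeasurable measurableSet_Ioo).pow_const 2).sub
      (measurable_deriv q).aemeasurable).add_const _ |>.add_const _)
    (by norm_num) two_pos (abs_nonneg (L + C + 2)) (fun y hy => ?_) (fun y hy => ?_)
    (fun y hy => ?_)
  · rw [abs_of_pos (Real.exp_pos _), hQ y hy.1, intervalIntegral.integral_symm y 1, mul_neg,
      neg_neg]
    exact exp_two_mul_integral_le_of_le hc hy
      (hqc.mono (ordConnected_Ioi.uIcc_subset hy.1 (mem_Ioi.2 one_pos))).intervalIntegrable hqle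
  · linarith [hCF y hy.1]
  · rw [div_div]
    linarith [hL y hy.1, neg_abs_le (L + C + 2)]
end

section
/- Let γ > 0 and let h : [0,∞) → ℝ be C¹ with h(0) = 0 and lim_{x→∞} h(x)/√x = +∞. Then J(x) := ∫₀ˣ 2h(z)/(γz) dz is well defined and finite for every x ≥ 0, ∫₀^∞ e^{−J(z)} dz < ∞, and the function v(x) := (∫ₓ^∞ e^{−J(z)} dz)/(∫₀^∞ e^{−J(z)} dz) satisfies: v(0) = 1, v is strictly decreasing, lim_{x→∞} v(x) = 0, and (γ/2)·x·v''(x) + h(x)·v'(x) = 0 for all x > 0. -/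
/-!
Near `0` the `C¹` bound `|h z| ≤ M z` keeps the integrand `2h(z)/(γz)` bounded, so `J` is finite
and continuous on `[0, ∞)`. Far out, `h z ≥ √z` gives `J' ≥ 2/(γ√z)`, hence
`J x ≥ (4/γ)√x - C`, and `e^{-J}` is dominated by the integrable `e^{-(4/γ)√x}`. Then `v` is the
normalised tail integral of a positive integrable function, so it decreases strictly from `1`
to `0`; and with `Z = ∫₀^∞ e^{-J}`,
`v' = -e^{-J}/Z` and `v'' = J' e^{-J}/Z` where `J' = 2h/(γx)`, which is the ODE.
-/

open Filter Set Topology MeasureTheory Real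

theorem hasDerivAt_intervalIntegral_of_continuousOn_Ioi {f : ℝ → ℝ} {a x : ℝ}
    (hf : ContinuousOn f (Ioi a)) (hint : IntervalIntegrable f volume a x) (hx : a < x) :
    HasDerivAt (fun u => ∫ z in a..u, f z) (f x) x :=
  intervalIntegral.integral_hasDerivAt_right hint (hf.stronglyMeasurableAtFilter isOpen_Ioi x hx)
    (hf.continuousAt (isOpen_Ioi.mem_nhds hx))

theorem hasDerivAt_integral_Ioi {f : ℝ → ℝ} {a x : ℝ} (hf : IntegrableOn f (Ioi a))
    (hc : ContinuousOn f (Ioi a)) (hx : a < x) :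
    HasDerivAt (fun u => ∫ z in Ioi u, f z) (-f x) x := by
  have hint : IntervalIntegrable f volume a x :=
    (intervalIntegrable_iff_integrableOn_Ioc_of_le hx.le).2 (hf.mono_set Ioc_subset_Ioi_self)
  refine ((hasDerivAt_intervalIntegral_of_continuousOn_Ioi hc hint hx).const_sub
    (∫ z in Ioi a, f z)).congr_of_eventuallyEq ?_
  filter_upwards [Ioi_mem_nhds hx] with u hu
  rw [← intervalIntegral.integral_Ioi_sub_Ioi hf (le_of_lt hu), sub_sub_cancel]

theorem strictAntiOn_integral_Ioi {f : ℝ → ℝ} {a : ℝ} (hf : IntegrableOn f (Ioi a))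
    (hpos : ∀ x > a, 0 < f x) : StrictAntiOn (fun x => ∫ z in Ioi x, f z) (Ici a) := by
  intro p hp q _ hpq
  have hint : IntervalIntegrable f volume p q :=
    (intervalIntegrable_iff_integrableOn_Ioc_of_le hpq.le).2
      (hf.mono_set (Ioc_subset_Ioi_self.trans (Ioi_subset_Ioi hp)))
  have := intervalIntegral.intervalIntegral_pos_of_pos_on hint
    (fun z hz => hpos z (lt_of_le_of_lt hp hz.1)) hpq
  rw [← intervalIntegral.integral_Ioi_sub_Ioi (hf.mono_set (Ioi_subset_Ioi hp)) hpq.le] at this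
  simpa only [sub_pos] using this

theorem integral_Ioi_pos {f : ℝ → ℝ} {a : ℝ} (hf : IntegrableOn f (Ioi a))
    (hpos : ∀ x > a, 0 < f x) : 0 < ∫ z in Ioi a, f z :=
  calc 0 ≤ ∫ z in Ioi (a + 1), f z :=
        setIntegral_nonneg measurableSet_Ioi fun z hz => (hpos z (by linarith [mem_Ioi.1 hz])).le
    _ < ∫ z in Ioi a, f z :=
        strictAntiOn_integral_Ioi hf hpos self_mem_Ici (by simp) (lt_add_one a)

theorem integrableOn_Ioi_of_le_exp_neg_sqrt {f : ℝ → ℝ} {a c C : ℝ} (ha : 0 ≤ a) (hc : 0 < c)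
    (hf : ContinuousOn f (Ioi a)) (hle : ∀ z > a, ‖f z‖ ≤ C * exp (-c * √z)) :
    IntegrableOn f (Ioi a) := by
  have hdom : IntegrableOn (fun z : ℝ => C * (z ^ (0 : ℝ) * exp (-c * z ^ (1 / 2 : ℝ)))) (Ioi a) :=
    ((integrableOn_rpow_mul_exp_neg_mul_rpow (by norm_num) (by norm_num) hc).mono_set
      (Ioi_subset_Ioi ha)).const_mul C
  refine hdom.mono' (hf.aestronglyMeasurable measurableSet_Ioi) ?_
  refine (ae_restrict_iff' measurableSet_Ioi).2 (ae_of_all _ fun z hz => ?_)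
  rw [rpow_zero, one_mul, ← sqrt_eq_rpow]
  exact hle z hz

noncomputable def driftRatio (γ : ℝ) (h : ℝ → ℝ) (z : ℝ) : ℝ := 2 * h z / (γ * z)

noncomputable def driftIntegral (γ : ℝ) (h : ℝ → ℝ) (x : ℝ) : ℝ :=
  ∫ z in (0 : ℝ)..x, driftRatio γ h z

section Feller

variable {γ : ℝ} {h : ℝ → ℝ}

theorem exists_abs_le_mul_of_contDiffOn (hC1 : ContDiffOn ℝ 1 h (Ici 0)) (h0 : h 0 = 0)
    (b : ℝ) : ∃ M, ∀ z ∈ Icc 0 b, |h z| ≤ M * z := by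
  obtain ⟨K, hK⟩ := (hC1.mono Icc_subset_Ici_self).exists_lipschitzOnWith one_ne_zero
    (convex_Icc 0 b) isCompact_Icc
  refine ⟨K, fun z hz => ?_⟩
  simpa [dist_eq, h0, abs_of_nonneg hz.1] using hK.dist_le_mul z hz 0 ⟨le_rfl, hz.1.trans hz.2⟩

theorem driftRatio_eq_mul (γ : ℝ) (h : ℝ → ℝ) (z : ℝ) : driftRatio γ h z = 2 / γ * (h z / z) :=
  mul_div_mul_comm _ _ _ _

theorem continuousOn_driftRatio (hC1 : ContDiffOn ℝ 1 h (Ici 0)) :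
    ContinuousOn (driftRatio γ h) (Ioi 0) := by
  simp only [funext (driftRatio_eq_mul γ h)]
  exact continuousOn_const.mul <| (hC1.continuousOn.mono Ioi_subset_Ici_self).div continuousOn_id
    fun z hz => (mem_Ioi.1 hz).ne'

theorem integrableOn_Ioc_driftRatio (hC1 : ContDiffOn ℝ 1 h (Ici 0)) (h0 : h 0 = 0) (b : ℝ) :
    IntegrableOn (driftRatio γ h) (Ioc 0 b) := by
  obtain ⟨M, hM⟩ := exists_abs_le_mul_of_contDiffOn hC1 h0 b
  refine (integrable_const (|2 / γ| * M)).mono'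
    (((continuousOn_driftRatio hC1).mono Ioc_subset_Ioi_self).aestronglyMeasurable
      measurableSet_Ioc) ?_
  refine (ae_restrict_iff' measurableSet_Ioc).2 (ae_of_all _ fun z hz => ?_)
  have hquot : |h z / z| ≤ M := by
    rw [abs_div, abs_of_pos hz.1, div_le_iff₀ hz.1]
    exact hM z (Ioc_subset_Icc_self hz)
  rw [norm_eq_abs, driftRatio_eq_mul, abs_mul]
  exact mul_le_mul_of_nonneg_left hquot (abs_nonneg _)

theorem intervalIntegrable_driftRatio (hC1 : ContDiffOn ℝ 1 h (Ici 0)) (h0 : h 0 = 0) {x : ℝ}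
    (hx : 0 ≤ x) : IntervalIntegrable (driftRatio γ h) volume 0 x :=
  (intervalIntegrable_iff_integrableOn_Ioc_of_le hx).2 (integrableOn_Ioc_driftRatio hC1 h0 x)

theorem hasDerivAt_driftIntegral (hC1 : ContDiffOn ℝ 1 h (Ici 0)) (h0 : h 0 = 0) {x : ℝ}
    (hx : 0 < x) : HasDerivAt (driftIntegral γ h) (driftRatio γ h x) x :=
  hasDerivAt_intervalIntegral_of_continuousOn_Ioi (continuousOn_driftRatio hC1)
    (intervalIntegrable_driftRatio hC1 h0 hx.le) hx

theorem continuousOn_driftIntegral (hC1 : ContDiffOn ℝ 1 h (Ici 0)) (h0 : h 0 = 0) {b : ℝ}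
    (hb : 0 ≤ b) : ContinuousOn (driftIntegral γ h) (Icc 0 b) := by
  rw [← uIcc_of_le hb]
  refine intervalIntegral.continuousOn_primitive_interval ?_
  rw [uIcc_of_le hb, integrableOn_Icc_iff_integrableOn_Ioc]
  exact integrableOn_Ioc_driftRatio hC1 h0 b

theorem exists_sqrt_sub_le_driftIntegral_sub (hγ : 0 < γ) (hC1 : ContDiffOn ℝ 1 h (Ici 0))
    (h0 : h 0 = 0) (hh : Tendsto (fun x => h x / √x) atTop atTop) :
    ∃ x₀ > 0, ∀ x ≥ x₀, 4 / γ * (√x - √x₀) ≤ driftIntegral γ h x - driftIntegral γ h x₀ := by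
  obtain ⟨x₀, hx₀⟩ :=
    ((hh.eventually_ge_atTop 1).and (eventually_ge_atTop 1)).exists_forall_of_atTop
  have hx₀pos : 0 < x₀ := one_pos.trans_le (hx₀ x₀ le_rfl).2
  have hderiv : ∀ y > 0, HasDerivAt (fun x => driftIntegral γ h x - 4 / γ * √x)
      (driftRatio γ h y - 4 / γ * (1 / (2 * √y))) y := fun y hy =>
    (hasDerivAt_driftIntegral hC1 h0 hy).sub ((hasDerivAt_sqrt hy.ne').const_mul _)
  have hmono : MonotoneOn (fun x => driftIntegral γ h x - 4 / γ * √x) (Ici x₀) := by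
    refine monotoneOn_of_hasDerivWithinAt_nonneg (convex_Ici x₀)
      (fun y hy => (hderiv y (hx₀pos.trans_le hy)).continuousAt.continuousWithinAt)
      (fun y hy => (hderiv y (hx₀pos.trans (interior_Ici.subset hy))).hasDerivWithinAt)
      fun y hy => ?_
    rw [interior_Ici] at hy
    have hy0 : 0 < y := hx₀pos.trans hy
    have hsqrt : √y ≤ h y := by
      have := (hx₀ y hy.le).1
      rwa [one_le_div (sqrt_pos.2 hy0)] at this
    have hkey : 4 / γ * (1 / (2 * √y)) = 2 * √y / (γ * y) := by
      have := sqrt_pos.2 hy0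
      field_simp
      rw [sq_sqrt hy0.le]
      ring
    rw [sub_nonneg, hkey, driftRatio]
    exact div_le_div_of_nonneg_right (by linarith) (by positivity)
  refine ⟨x₀, hx₀pos, fun x hx => ?_⟩
  have := hmono self_mem_Ici hx hx
  dsimp only at this
  linarith

theorem integrableOn_exp_neg_driftIntegral (hγ : 0 < γ) (hC1 : ContDiffOn ℝ 1 h (Ici 0))
    (h0 : h 0 = 0) (hh : Tendsto (fun x => h x / √x) atTop atTop) :
    IntegrableOn (fun z => exp (-driftIntegral γ h z)) (Ioi 0) := by
  obtain ⟨x₀, hx₀, hgrowth⟩ := exists_sqrt_sub_le_driftIntegral_sub hγ hC1 h0 hh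
  have hnear : IntegrableOn (fun z => exp (-driftIntegral γ h z)) (Ioc 0 x₀) :=
    (continuousOn_driftIntegral hC1 h0 hx₀.le).neg.rexp.integrableOn_Icc.mono_set
      Ioc_subset_Icc_self
  have htail : IntegrableOn (fun z => exp (-driftIntegral γ h z)) (Ioi x₀) := by
    refine integrableOn_Ioi_of_le_exp_neg_sqrt (c := 4 / γ)
      (C := exp (-driftIntegral γ h x₀ + 4 / γ * √x₀))
      hx₀.le (by positivity) (fun y hy => ?_) (fun z hz => ?_)
    · exact (hasDerivAt_driftIntegral hC1 h0 (hx₀.trans hy)).continuousAt.neg.rexp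
        |>.continuousWithinAt
    · rw [norm_of_nonneg (exp_pos _).le, ← exp_add]
      exact exp_le_exp.2 (by linarith [hgrowth z hz.le])
  rw [← Ioc_union_Ioi_eq_Ioi hx₀.le]
  exact hnear.union htail

theorem ode_integral_Ioi_exp_neg_driftIntegral (hγ : γ ≠ 0) (hC1 : ContDiffOn ℝ 1 h (Ici 0))
    (h0 : h 0 = 0) (hint : IntegrableOn (fun z => exp (-driftIntegral γ h z)) (Ioi 0)) {x : ℝ}
    (hx : 0 < x) :
    γ / 2 * x * deriv (deriv fun u => ∫ z in Ioi u, exp (-driftIntegral γ h z)) x +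
      h x * deriv (fun u => ∫ z in Ioi u, exp (-driftIntegral γ h z)) x = 0 := by
  have hcont : ContinuousOn (fun z => exp (-driftIntegral γ h z)) (Ioi 0) := fun y hy =>
    (hasDerivAt_driftIntegral hC1 h0 hy).continuousAt.neg.rexp.continuousWithinAt
  have hderiv : deriv (fun u => ∫ z in Ioi u, exp (-driftIntegral γ h z)) =ᶠ[𝓝 x]
      fun y => -exp (-driftIntegral γ h y) := by
    filter_upwards [Ioi_mem_nhds hx] with y hy using (hasDerivAt_integral_Ioi hint hcont hy).deriv
  have hderiv2 : HasDerivAt (fun y => -exp (-driftIntegral γ h y))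
      (-(exp (-driftIntegral γ h x) * -driftRatio γ h x)) x :=
    (hasDerivAt_driftIntegral hC1 h0 hx).neg.exp.neg
  rw [hderiv.deriv_eq, hderiv.eq_of_nhds, hderiv2.deriv, driftRatio]
  field_simp
  ring

end Feller

/-- Let `γ > 0` and let `h : [0,∞) → ℝ` be `C¹` with `h(0) = 0` and
`h(x)/√x → +∞` as `x → ∞`. Then `J(x) = ∫₀ˣ 2h(z)/(γz) dz` is well defined and finite for
every `x ≥ 0`, `∫₀^∞ e^{−J(z)} dz < ∞`, and the function
`v(x) = (∫ₓ^∞ e^{−J}) / (∫₀^∞ e^{−J})` satisfies `v(0) = 1`, `v` is strictly decreasing,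
`v(x) → 0` as `x → ∞`, and `(γ/2) x v''(x) + h(x) v'(x) = 0` for all `x > 0`. -/
theorem extinction_probability_of_supercritical_Feller (γ : ℝ) (hγ : 0 < γ) (h : ℝ → ℝ)
    (hC1 : ContDiffOn ℝ 1 h (Set.Ici 0))
    (h0 : h 0 = 0)
    (hh : Tendsto (fun x => h x / Real.sqrt x) atTop atTop)
    (J v : ℝ → ℝ)
    (hJ : ∀ x, J x = ∫ z in (0:ℝ)..x, 2 * h z / (γ * z))
    (hv : ∀ x, v x =
      (∫ z in Set.Ioi x, Real.exp (-(J z))) / ∫ z in Set.Ioi (0:ℝ), Real.exp (-(J z))) :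
    (∀ x, 0 ≤ x →
      IntervalIntegrable (fun z => 2 * h z / (γ * z)) MeasureTheory.volume 0 x) ∧
    MeasureTheory.IntegrableOn (fun z => Real.exp (-(J z))) (Set.Ioi 0) ∧
    v 0 = 1 ∧
    StrictAntiOn v (Set.Ici 0) ∧
    Tendsto v atTop (𝓝 0) ∧
    (∀ x, 0 < x → γ / 2 * x * deriv (deriv v) x + h x * deriv v x = 0) := by
  obtain rfl : J = driftIntegral γ h := funext hJ
  set T := fun u => ∫ z in Ioi u, exp (-driftIntegral γ h z)
  obtain rfl : v = fun x => T x / T 0 := funext hv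
  have hint := integrableOn_exp_neg_driftIntegral hγ hC1 h0 hh
  have hpos : ∀ z > 0, 0 < exp (-driftIntegral γ h z) := fun z _ => exp_pos _
  have hT0 : 0 < T 0 := integral_Ioi_pos hint hpos
  refine ⟨fun x hx => intervalIntegrable_driftRatio hC1 h0 hx, hint, div_self hT0.ne',
    fun p hp q hq hpq =>
      div_lt_div_of_pos_right (strictAntiOn_integral_Ioi hint hpos hp hq hpq) hT0,
    by simpa using (tendsto_integral_Ioi_zero tendsto_id).div_const (T 0), fun x hx => ?_⟩
  have hdiv : deriv (fun x => T x / T 0) = fun x => deriv T x / T 0 :=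
    funext fun _ => deriv_div_const _
  rw [hdiv, deriv_div_const]
  linear_combination ode_integral_Ioi_exp_neg_driftIntegral hγ.ne' hC1 h0 hint hx / T 0
end
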